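/- arXiv:2205.04882 — 5 statements merged into one kernel-verified Lean document; each statement's English description precedes it below -/
import Mathlib

section
/- Two LPODs P1 and P2 are strongly equivalent under the most-preferred answer sets if and only if they are strongly equivalent under all the answer sets. -/
/-- The four truth values F < F* < T* < T. -/
inductive V where
  | F | Fs | Ts | T
  deriving DecidableEq, Repr

def V.toNat : V → ℕ
  | .F => 0
  | .Fs => 1
  | .Ts => 2
  | .T => 3

instance : LinearOrder V :=
  LinearOrder.lift' V.toNat (by intro a b; cases a <;> cases b <;> simp [V.toNat])

/-- An LPOD rule `hd × hds(1) × ⋯ × hds(k) ← pos(1) ∧ ⋯ ∧ not neg(1) ∧ ⋯`. -/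
structure Rule where
  hd : ℕ
  hds : List ℕ
  pos : List ℕ
  neg : List ℕ
  deriving DecidableEq, Repr

/-- Value of an ordered disjunction `c × cs(1) × ⋯ × cs(k)` of atoms. -/
def evalHead (I : ℕ → V) : ℕ → List ℕ → V
  | c, [] => I c
  | c, c' :: cs => if I c = V.Fs then evalHead I c' cs else I c

/-- Value of `not φ` given the value of `φ`. -/
def evalNot (v : V) : V := if v ≤ V.Fs then V.T else V.F

/-- Value of the body of a rule (the empty body evaluates to `T`). -/
def evalBody (I : ℕ → V) (r : Rule) : V :=
  ((r.pos.map I) ++ (r.neg.map (fun b => evalNot (I b)))).foldr min V.T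

/-- A rule evaluates to `T` under `I` (i.e. `I(head) ≥ I(body)`). -/
def Rule.sat (I : ℕ → V) (r : Rule) : Prop :=
  evalBody I r ≤ evalHead I r.hd r.hds

/-- An LPOD: a finite set of rules. -/
abbrev Program := Finset Rule

def isModel (I : ℕ → V) (P : Program) : Prop := ∀ r ∈ P, r.sat I

/-- Logical equivalence in the four-valued logic: same models. -/
def logEquiv (P1 P2 : Program) : Prop := ∀ I : ℕ → V, isModel I P1 ↔ isModel I P2

def Rule.atoms (r : Rule) : Finset ℕ :=
  {r.hd} ∪ r.hds.toFinset ∪ r.pos.toFinset ∪ r.neg.toFinset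

/-- The atoms occurring in a program. -/
def progAtoms (P : Program) : Finset ℕ := P.biUnion Rule.atoms

/-- The ordering `⪯` on truth values: reflexive closure of
    `F ≺ F*`, `F ≺ T*`, `F ≺ T`, `T* ≺ T`. -/
def V.pre (v1 v2 : V) : Prop :=
  v1 = v2 ∨ (v1 = V.F ∧ v2 ≠ V.F) ∨ (v1 = V.Ts ∧ v2 = V.T)

/-- `I1 ⪯ I2` relative to the atoms of `P`. -/
def interpLe (P : Program) (I1 I2 : ℕ → V) : Prop :=
  ∀ A ∈ progAtoms P, V.pre (I1 A) (I2 A)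

/-- `I` is solid for `P`: no atom of `P` gets the value `T*`. -/
def solid (P : Program) (I : ℕ → V) : Prop :=
  ∀ A ∈ progAtoms P, I A ≠ V.Ts

/-- An answer set of `P`: a `⪯`-minimal model of `P` that is solid. -/
def answerSet (P : Program) (M : ℕ → V) : Prop :=
  isModel M P ∧ solid P M ∧
    ∀ N : ℕ → V, isModel N P → interpLe P N M → interpLe P M N

/-- The atoms of `P` receiving the value `F*` under `M`. -/
def fstars (P : Program) (M : ℕ → V) : Finset ℕ :=
  (progAtoms P).filter (fun A => M A = V.Fs)

/-- A most-preferred answer set: `⊏`-minimal among the answer sets. -/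
def mostPreferred (P : Program) (M : ℕ → V) : Prop :=
  answerSet P M ∧ ∀ N : ℕ → V, answerSet P N → ¬ fstars P N ⊂ fstars P M

/-- Strong equivalence under the most-preferred answer sets. -/
def seMost (P1 P2 : Program) : Prop :=
  ∀ P : Program, ∀ M : ℕ → V, mostPreferred (P1 ∪ P) M ↔ mostPreferred (P2 ∪ P) M

/-- Strong equivalence under all the answer sets. -/
def seAll (P1 P2 : Program) : Prop :=
  ∀ P : Program, ∀ M : ℕ → V, answerSet (P1 ∪ P) M ↔ answerSet (P2 ∪ P) M

/-- A normal logic program: every rule has a single atom as head. -/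
def normalProg (P : Program) : Prop := ∀ r ∈ P, r.hds = []

/-- `X` is closed under the rules of the Gelfond–Lifschitz reduct `P^S`. -/
def reductClosed (P : Program) (S X : Set ℕ) : Prop :=
  ∀ r ∈ P, (∀ b ∈ r.neg, b ∉ S) → (∀ a ∈ r.pos, a ∈ X) → r.hd ∈ X

/-- `S` is a stable model (standard answer set): the least Herbrand model of `P^S`. -/
def stableModel (P : Program) (S : Set ℕ) : Prop :=
  reductClosed P S S ∧ ∀ X : Set ℕ, reductClosed P S X → S ⊆ X

/-- `I` is three-valued for `P`: no atom of `P` gets the value `F*`. -/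
def threeValued (P : Program) (I : ℕ → V) : Prop :=
  ∀ A ∈ progAtoms P, I A ≠ V.Fs

/-! Strong equivalence under all answer sets gives it under the most-preferred ones because an
`F*`-atom of an answer set `M` of `P1 ∪ P` occurs in `P2 ∪ P`: otherwise lowering it to `F` would
give an answer set of `P2 ∪ P`, hence of `P1 ∪ P`, below `M`.

Conversely, a context can make any answer set most-preferred. With fresh atoms `z` and `p A`, the
rules `z ←`, `A × z ←` and `p A ← A ∧ not p A` force `A = F*` in every answer set, so pinning the
`F*`-atoms of `M` this way makes `M` (extended to the fresh atoms) most-preferred. Moving it from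
`P1 ∪ P` to `P2 ∪ P` shows that `M` is a model of `P2 ∪ P` and that no model of `P2 ∪ P` keeping
the `F*`-atoms of `M` lies strictly below `M`. A model `N` of `P2 ∪ P` below `M` keeps them indeed:
collapsing the `T*` values of `N` to `T` gives a solid model of `P2 ∪ P`, which, pinned at all its
atoms, moves back to a model of `P1 ∪ P` below `M`, so by minimality of `M` it keeps the
`F*`-atoms of `M`, and so does `N`.
-/

instance : Fintype V := ⟨{V.F, V.Fs, V.Ts, V.T}, fun x => by cases x <;> simp⟩

instance (a b : V) : Decidable (V.pre a b) := by unfold V.pre; infer_instance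

namespace V

lemma pre_refl (x : V) : V.pre x x := Or.inl rfl

lemma F_pre : ∀ x : V, V.pre V.F x := by decide

lemma le_Fs_of_pre_Fs : ∀ x : V, V.pre x V.Fs → x ≤ V.Fs := by decide

lemma eq_Fs_of_Fs_pre : ∀ x : V, V.pre V.Fs x → x = V.Fs := by decide

lemma eq_Fs_of_le_of_le_Fs : ∀ x y : V, x = V.Fs ∨ x = V.T → x ≤ y ∨ V.Ts ≤ y → y ≤ V.Fs →
    x = V.Fs ∧ y = V.Fs := by
  decide

def solidify (v : V) : V := if v = V.Ts then V.T else v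

lemma solidify_min : ∀ x y : V, solidify (min x y) = min (solidify x) (solidify y) := by decide

lemma solidify_mono : ∀ x y : V, x ≤ y → solidify x ≤ solidify y := by decide

lemma solidify_evalNot : ∀ x : V, evalNot (solidify x) = solidify (evalNot x) := by decide

lemma solidify_eq_Fs_iff : ∀ x : V, solidify x = V.Fs ↔ x = V.Fs := by decide

lemma solidify_ne_Ts : ∀ x : V, solidify x ≠ V.Ts := by decide

lemma solidify_pre : ∀ x y : V, V.pre x y → y ≠ V.Ts → V.pre (solidify x) y := by decide

end V

lemma Rule.mem_atoms {r : Rule} {a : ℕ} :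
    a ∈ r.atoms ↔ a = r.hd ∨ a ∈ r.hds ∨ a ∈ r.pos ∨ a ∈ r.neg := by
  simp [Rule.atoms]

lemma evalHead_congr {I J : ℕ → V} (c : ℕ) (cs : List ℕ) (h : ∀ a ∈ c :: cs, I a = J a) :
    evalHead I c cs = evalHead J c cs := by
  induction cs generalizing c with
  | nil => simpa [evalHead] using h c
  | cons d ds ih =>
    simp only [evalHead, h c List.mem_cons_self]
    split_ifs
    · exact ih d fun a ha => h a (List.mem_cons_of_mem c ha)
    · rfl

lemma evalBody_congr {I J : ℕ → V} (r : Rule) (hpos : ∀ a ∈ r.pos, I a = J a)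
    (hneg : ∀ a ∈ r.neg, I a = J a) : evalBody I r = evalBody J r := by
  unfold evalBody
  rw [List.map_congr_left hpos, List.map_congr_left fun a ha => congrArg evalNot (hneg a ha)]

lemma Rule.sat_congr {I J : ℕ → V} {r : Rule} (h : ∀ a ∈ r.atoms, I a = J a) :
    r.sat I ↔ r.sat J := by
  have hmem := fun a => (Rule.mem_atoms (r := r) (a := a)).mpr
  unfold Rule.sat
  rw [evalBody_congr r (fun a ha => h a (hmem a (.inr (.inr (.inl ha)))))
      (fun a ha => h a (hmem a (.inr (.inr (.inr ha))))),
    evalHead_congr r.hd r.hds fun a ha => h a (hmem a ((List.mem_cons.mp ha).imp id .inl))]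

lemma mem_progAtoms {P : Program} {a : ℕ} : a ∈ progAtoms P ↔ ∃ r ∈ P, a ∈ r.atoms := by
  simp [progAtoms]

lemma atoms_subset_progAtoms {P : Program} {r : Rule} (hr : r ∈ P) : r.atoms ⊆ progAtoms P :=
  fun _ ha => mem_progAtoms.mpr ⟨r, hr, ha⟩

lemma progAtoms_union (P Q : Program) : progAtoms (P ∪ Q) = progAtoms P ∪ progAtoms Q :=
  Finset.union_biUnion

lemma progAtoms_subset_union_left (P Q : Program) : progAtoms P ⊆ progAtoms (P ∪ Q) := by
  rw [progAtoms_union]; exact Finset.subset_union_left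

lemma isModel_union {I : ℕ → V} {P Q : Program} :
    isModel I (P ∪ Q) ↔ isModel I P ∧ isModel I Q :=
  Finset.forall_mem_union

lemma isModel_congr {I J : ℕ → V} {P : Program} (h : ∀ a ∈ progAtoms P, I a = J a) :
    isModel I P ↔ isModel J P :=
  forall₂_congr fun _ hr => Rule.sat_congr fun a ha => h a (atoms_subset_progAtoms hr ha)

lemma answerSet_congr {I J : ℕ → V} {P : Program} (h : ∀ a ∈ progAtoms P, I a = J a)
    (hI : answerSet P I) : answerSet P J := by
  refine ⟨(isModel_congr h).mp hI.1, fun a ha => h a ha ▸ hI.2.1 a ha, fun N hN hNJ a ha => ?_⟩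
  rw [← h a ha]
  exact hI.2.2 N hN (fun b hb => h b hb ▸ hNJ b hb) a ha

lemma mem_fstars {P : Program} {M : ℕ → V} {a : ℕ} :
    a ∈ fstars P M ↔ a ∈ progAtoms P ∧ M a = V.Fs :=
  Finset.mem_filter

lemma evalHead_solidify (I : ℕ → V) (c : ℕ) (cs : List ℕ) :
    evalHead (fun a => (I a).solidify) c cs = (evalHead I c cs).solidify := by
  induction cs generalizing c with
  | nil => rfl
  | cons d ds ih => simp only [evalHead, V.solidify_eq_Fs_iff]; split_ifs <;> simp [ih]

lemma foldr_min_solidify (l : List V) :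
    (l.map V.solidify).foldr min V.T = (l.foldr min V.T).solidify := by
  induction l with
  | nil => rfl
  | cons a l ih => simp [ih, V.solidify_min]

lemma evalBody_solidify (I : ℕ → V) (r : Rule) :
    evalBody (fun a => (I a).solidify) r = (evalBody I r).solidify := by
  simp only [evalBody, V.solidify_evalNot, ← foldr_min_solidify, List.map_append, List.map_map]
  rfl

lemma isModel_solidify {I : ℕ → V} {P : Program} (h : isModel I P) :
    isModel (fun a => (I a).solidify) P := fun r hr => by
  unfold Rule.sat
  rw [evalBody_solidify, evalHead_solidify]
  exact V.solidify_mono _ _ (h r hr)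

/- The rules `a ←`, `a × z ←` and `q ← a ∧ not q`. -/
def Rule.fact (a : ℕ) : Rule := ⟨a, [], [], []⟩

def Rule.ordPair (a z : ℕ) : Rule := ⟨a, [z], [], []⟩

def Rule.selfBlock (a q : ℕ) : Rule := ⟨q, [], [a], [q]⟩

lemma Rule.mem_atoms_fact {a b : ℕ} : b ∈ (Rule.fact a).atoms ↔ b = a := by
  simp [Rule.fact, Rule.mem_atoms]

lemma Rule.mem_atoms_ordPair {a z b : ℕ} : b ∈ (Rule.ordPair a z).atoms ↔ b = a ∨ b = z := by
  simp [Rule.ordPair, Rule.mem_atoms]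

lemma Rule.mem_atoms_selfBlock {a q b : ℕ} : b ∈ (Rule.selfBlock a q).atoms ↔ b = q ∨ b = a := by
  simp only [Rule.selfBlock, Rule.mem_atoms, List.not_mem_nil, List.mem_singleton]
  tauto

lemma Rule.sat_fact {I : ℕ → V} {a : ℕ} : (Rule.fact a).sat I ↔ I a = V.T := by
  have key : ∀ x : V, V.T ≤ x ↔ x = V.T := by decide
  simp [Rule.sat, Rule.fact, evalBody, evalHead, key]

lemma Rule.sat_ordPair {I : ℕ → V} {a z : ℕ} :
    (Rule.ordPair a z).sat I ↔ (I a = V.Fs ∧ I z = V.T) ∨ I a = V.T := by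
  have key : ∀ x y : V, V.T ≤ (if x = V.Fs then y else x) ↔ (x = V.Fs ∧ y = V.T) ∨ x = V.T := by
    decide
  simp [Rule.sat, Rule.ordPair, evalBody, evalHead, key]

lemma Rule.sat_selfBlock {I : ℕ → V} {a q : ℕ} :
    (Rule.selfBlock a q).sat I ↔ I a ≤ I q ∨ V.Ts ≤ I q := by
  have key : ∀ x y : V, min x (min (evalNot y) V.T) ≤ y ↔ x ≤ y ∨ V.Ts ≤ y := by decide
  simp [Rule.sat, Rule.selfBlock, evalBody, evalHead, key]

structure FreshAtoms (U : Finset ℕ) where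
  z : ℕ
  p : ℕ → ℕ
  z_notMem : z ∉ U
  p_notMem : ∀ A, p A ∉ U
  p_ne_z : ∀ A, p A ≠ z
  p_injective : Function.Injective p

namespace FreshAtoms

lemma nonempty (U : Finset ℕ) : Nonempty (FreshAtoms U) := by
  obtain ⟨n, hn⟩ := U.exists_nat_subset_range
  have hU : ∀ a ∈ U, a < n := fun a ha => Finset.mem_range.mp (hn ha)
  exact ⟨{ z := n, p := fun A => n + 1 + A
           z_notMem := fun h => (hU n h).false
           p_notMem := fun A h => by have := hU _ h; omega
           p_ne_z := fun A => by omega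
           p_injective := fun A B h => by simpa using h }⟩

variable {U : Finset ℕ} (f : FreshAtoms U)

/-- With `z` true, `A × z` leaves `A` the values `F*` and `T`, and `p A ← A ∧ not p A` excludes
`T` from answer sets, since `A = T` would force `p A ≥ T*` and `p A = T` is not minimal.
So in the answer sets of `R ∪ f.pin T S` the atoms of `T` are `T` and those of `S` are `F*`. -/
def pin (T S : Finset ℕ) : Program :=
  insert (Rule.fact f.z) (T.image Rule.fact ∪ S.image (fun A => Rule.ordPair A f.z) ∪
    S.image (fun A => Rule.selfBlock A (f.p A)))

def extend (S : Finset ℕ) (J : ℕ → V) : ℕ → V :=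
  fun a => if a = f.z then V.T else if a ∈ S.image f.p then V.Fs else J a

variable {f} {R : Program} {T S : Finset ℕ} {J W N : ℕ → V}

lemma extend_of_mem {a : ℕ} (ha : a ∈ U) : f.extend S J a = J a := by
  have hz : a ≠ f.z := fun h => f.z_notMem (h ▸ ha)
  have hp : a ∉ S.image f.p := fun h => by
    obtain ⟨A, -, rfl⟩ := Finset.mem_image.mp h
    exact f.p_notMem A ha
  simp only [extend, if_neg hz, if_neg hp]

lemma extend_z : f.extend S J f.z = V.T := if_pos rfl

lemma extend_p {A : ℕ} (hA : A ∈ S) : f.extend S J (f.p A) = V.Fs := by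
  simp only [extend, if_neg (f.p_ne_z A), if_pos (Finset.mem_image_of_mem f.p hA)]

lemma isModel_pin : isModel N (f.pin T S) ↔ N f.z = V.T ∧ (∀ A ∈ T, N A = V.T) ∧
    (∀ A ∈ S, (Rule.ordPair A f.z).sat N) ∧ ∀ A ∈ S, (Rule.selfBlock A (f.p A)).sat N := by
  simp only [isModel, pin, Finset.forall_mem_insert, Finset.forall_mem_union,
    Finset.forall_mem_image, Rule.sat_fact, and_assoc]

lemma forall_mem_progAtoms_union_pin {Q : ℕ → Prop} (hR : ∀ a ∈ progAtoms R, Q a)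
    (hz : Q f.z) (hT : ∀ a ∈ T, Q a) (hS : ∀ a ∈ S, Q a) (hp : ∀ A ∈ S, Q (f.p A)) :
    ∀ a ∈ progAtoms (R ∪ f.pin T S), Q a := by
  intro a ha
  rcases Finset.mem_union.mp ((progAtoms_union R _) ▸ ha) with ha | ha
  · exact hR a ha
  obtain ⟨r, hr, har⟩ := mem_progAtoms.mp ha
  simp only [pin, Finset.mem_insert, Finset.mem_union, Finset.mem_image] at hr
  rcases hr with rfl | (⟨A, hA, rfl⟩ | ⟨A, hA, rfl⟩) | ⟨A, hA, rfl⟩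
  · exact Rule.mem_atoms_fact.mp har ▸ hz
  · exact Rule.mem_atoms_fact.mp har ▸ hT A hA
  · rcases Rule.mem_atoms_ordPair.mp har with rfl | rfl
    exacts [hS a hA, hz]
  · rcases Rule.mem_atoms_selfBlock.mp har with rfl | rfl
    exacts [hp A hA, hS a hA]

lemma mem_progAtoms_union_pin {A : ℕ} (hA : A ∈ S) :
    A ∈ progAtoms (R ∪ f.pin T S) ∧ f.p A ∈ progAtoms (R ∪ f.pin T S) := by
  have hr : Rule.selfBlock A (f.p A) ∈ R ∪ f.pin T S :=
    Finset.mem_union_right _ <| Finset.mem_insert_of_mem <|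
      Finset.mem_union_right _ (Finset.mem_image_of_mem _ hA)
  exact ⟨atoms_subset_progAtoms hr (Rule.mem_atoms_selfBlock.mpr (.inr rfl)),
    atoms_subset_progAtoms hr (Rule.mem_atoms_selfBlock.mpr (.inl rfl))⟩

lemma isModel_extend (hR : progAtoms R ⊆ U) (hT : T ⊆ U) (hS : S ⊆ U) (hJ : isModel J R)
    (hJT : ∀ A ∈ T, J A = V.T) (hJS : ∀ A ∈ S, J A = V.Fs) :
    isModel (f.extend S J) (R ∪ f.pin T S) := by
  refine isModel_union.mpr ⟨(isModel_congr fun a ha => extend_of_mem (hR ha)).mpr hJ,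
    isModel_pin.mpr ⟨extend_z, fun A hA => ?_, fun A hA => ?_, fun A hA => ?_⟩⟩
  · rw [extend_of_mem (hT hA), hJT A hA]
  · rw [Rule.sat_ordPair, extend_of_mem (hS hA), hJS A hA, extend_z]
    exact .inl ⟨rfl, rfl⟩
  · rw [Rule.sat_selfBlock, extend_of_mem (hS hA), hJS A hA, extend_p hA]
    exact .inl le_rfl

lemma pinned_values (hN : isModel N (R ∪ f.pin T S)) (hp : ∀ A ∈ S, N (f.p A) ≤ V.Fs) :
    N f.z = V.T ∧ (∀ A ∈ T, N A = V.T) ∧ ∀ A ∈ S, N A = V.Fs ∧ N (f.p A) = V.Fs := by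
  obtain ⟨hz, hT, hord, hblock⟩ := isModel_pin.mp (isModel_union.mp hN).2
  refine ⟨hz, hT, fun A hA => V.eq_Fs_of_le_of_le_Fs _ _ ?_ (Rule.sat_selfBlock.mp (hblock A hA))
    (hp A hA)⟩
  exact (Rule.sat_ordPair.mp (hord A hA)).imp_left And.left

lemma isModel_update_p_Ts (hR : progAtoms R ⊆ U) (hT : T ⊆ U) (hS : S ⊆ U)
    (hN : isModel N (R ∪ f.pin T S)) {A : ℕ} (hA : A ∈ S) :
    isModel (Function.update N (f.p A) V.Ts) (R ∪ f.pin T S) := by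
  set N' := Function.update N (f.p A) V.Ts with hN'def
  have hN'N : ∀ a, a ≠ f.p A → N' a = N a := fun a ha => Function.update_of_ne ha _ _
  have hU : ∀ a ∈ U, N' a = N a := fun a ha => hN'N a fun h => f.p_notMem A (h ▸ ha)
  obtain ⟨hz, hNT, hord, hblock⟩ := isModel_pin.mp (isModel_union.mp hN).2
  refine isModel_union.mpr ⟨(isModel_congr fun a ha => hU a (hR ha)).mpr (isModel_union.mp hN).1,
    isModel_pin.mpr ⟨?_, fun B hB => ?_, fun B hB => ?_, fun B hB => ?_⟩⟩
  · rw [hN'N _ (f.p_ne_z A).symm]; exact hz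
  · rw [hU B (hT hB)]; exact hNT B hB
  · refine (Rule.sat_congr fun a ha => ?_).mpr (hord B hB)
    rcases Rule.mem_atoms_ordPair.mp ha with rfl | rfl
    exacts [hU _ (hS hB), hN'N _ (f.p_ne_z A).symm]
  · by_cases hBA : B = A
    · subst hBA
      rw [Rule.sat_selfBlock, hN'def, Function.update_self]
      exact .inr le_rfl
    · refine (Rule.sat_congr fun a ha => ?_).mpr (hblock B hB)
      rcases Rule.mem_atoms_selfBlock.mp ha with rfl | rfl
      exacts [hN'N _ fun h => hBA (f.p_injective h), hU _ (hS hB)]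

lemma p_le_Fs_of_answerSet (hR : progAtoms R ⊆ U) (hT : T ⊆ U) (hS : S ⊆ U)
    (hN : answerSet (R ∪ f.pin T S) N) {A : ℕ} (hA : A ∈ S) : N (f.p A) ≤ V.Fs := by
  have hpA := (mem_progAtoms_union_pin (f := f) (R := R) (T := T) hA).2
  by_contra hgt
  have hNT : N (f.p A) = V.T := by
    have hsolid := hN.2.1 _ hpA
    generalize N (f.p A) = x at hsolid hgt
    decide +revert
  have hle : interpLe (R ∪ f.pin T S) (Function.update N (f.p A) V.Ts) N := fun a _ => by
    rcases eq_or_ne a (f.p A) with rfl | ha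
    · rw [Function.update_self, hNT]; decide
    · rw [Function.update_of_ne ha]; exact V.pre_refl _
  have hmin := hN.2.2 _ (isModel_update_p_Ts hR hT hS hN.1 hA) hle _ hpA
  rw [Function.update_self, hNT] at hmin
  exact absurd hmin (by decide)

lemma solid_extend (hR : progAtoms R ⊆ U) (hT : T ⊆ U) (hS : S ⊆ U) (hW : solid R W)
    (hWT : ∀ A ∈ T, W A = V.T) (hWS : ∀ A ∈ S, W A = V.Fs) :
    solid (R ∪ f.pin T S) (f.extend S W) :=
  forall_mem_progAtoms_union_pin (fun a ha => by rw [extend_of_mem (hR ha)]; exact hW a ha)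
    (by rw [extend_z]; decide) (fun a ha => by rw [extend_of_mem (hT ha), hWT a ha]; decide)
    (fun a ha => by rw [extend_of_mem (hS ha), hWS a ha]; decide)
    (fun A hA => by rw [extend_p hA]; decide)

lemma extend_le_of_le (hR : progAtoms R ⊆ U) (hT : T ⊆ U) (hS : S ⊆ U)
    (hWT : ∀ A ∈ T, W A = V.T) (hWS : ∀ A ∈ S, W A = V.Fs)
    (hcover : ∀ N, isModel N R → (∀ A ∈ T, N A = V.T) → (∀ A ∈ S, N A = V.Fs) →
      interpLe R N W → interpLe R W N)
    (hN : isModel N (R ∪ f.pin T S)) (hle : interpLe (R ∪ f.pin T S) N (f.extend S W)) :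
    interpLe (R ∪ f.pin T S) (f.extend S W) N := by
  have hp : ∀ A ∈ S, N (f.p A) ≤ V.Fs := fun A hA =>
    V.le_Fs_of_pre_Fs _ (extend_p hA ▸ hle _ (mem_progAtoms_union_pin hA).2)
  obtain ⟨hz, hNT, hNS⟩ := pinned_values hN hp
  have hNW : interpLe R N W := fun a ha => by
    simpa only [extend_of_mem (hR ha)] using hle a (progAtoms_subset_union_left R _ ha)
  have hWN := hcover N (isModel_union.mp hN).1 hNT (fun A hA => (hNS A hA).1) hNW
  refine forall_mem_progAtoms_union_pin (fun a ha => ?_) ?_ (fun a ha => ?_) (fun a ha => ?_)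
    (fun A hA => ?_)
  · rw [extend_of_mem (hR ha)]; exact hWN a ha
  · rw [extend_z, hz]; exact V.pre_refl _
  · rw [extend_of_mem (hT ha), hWT a ha, hNT a ha]; exact V.pre_refl _
  · rw [extend_of_mem (hS ha), hWS a ha, (hNS a ha).1]; exact V.pre_refl _
  · rw [extend_p hA, (hNS A hA).2]; exact V.pre_refl _

lemma fstars_extend_subset (hR : progAtoms R ⊆ U) (hT : T ⊆ U) (hS : S ⊆ U)
    (hWT : ∀ A ∈ T, W A = V.T) (hfs : fstars R W ⊆ S) (hN : answerSet (R ∪ f.pin T S) N) :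
    fstars (R ∪ f.pin T S) (f.extend S W) ⊆ fstars (R ∪ f.pin T S) N := by
  obtain ⟨-, -, hNS⟩ := pinned_values hN.1 fun A hA => p_le_Fs_of_answerSet hR hT hS hN hA
  intro a ha
  obtain ⟨haP, haFs⟩ := mem_fstars.mp ha
  refine mem_fstars.mpr ⟨haP, ?_⟩
  refine forall_mem_progAtoms_union_pin (Q := fun a => f.extend S W a = V.Fs → N a = V.Fs)
    (fun a ha h => ?_) (fun h => ?_) (fun a ha h => ?_) (fun a ha _ => (hNS a ha).1)
    (fun A hA _ => (hNS A hA).2) a haP haFs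
  · rw [extend_of_mem (hR ha)] at h
    exact (hNS a (hfs (mem_fstars.mpr ⟨ha, h⟩))).1
  · rw [extend_z] at h; exact absurd h (by decide)
  · rw [extend_of_mem (hT ha), hWT a ha] at h; exact absurd h (by decide)

theorem mostPreferred_extend (hR : progAtoms R ⊆ U) (hT : T ⊆ U) (hS : S ⊆ U)
    (hW : isModel W R) (hsolid : solid R W)
    (hWT : ∀ A ∈ T, W A = V.T) (hWS : ∀ A ∈ S, W A = V.Fs) (hfs : fstars R W ⊆ S)
    (hcover : ∀ N, isModel N R → (∀ A ∈ T, N A = V.T) → (∀ A ∈ S, N A = V.Fs) →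
      interpLe R N W → interpLe R W N) :
    mostPreferred (R ∪ f.pin T S) (f.extend S W) :=
  ⟨⟨isModel_extend hR hT hS hW hWT hWS, solid_extend hR hT hS hsolid hWT hWS,
      fun _ hN hle => extend_le_of_le hR hT hS hWT hWS hcover hN hle⟩,
    fun _ hN => not_ssubset_of_superset (fstars_extend_subset hR hT hS hWT hfs hN)⟩

lemma isModel_solid_of_answerSet_extend (hR : progAtoms R ⊆ U)
    (h : answerSet (R ∪ f.pin T S) (f.extend S W)) : isModel W R ∧ solid R W :=
  ⟨(isModel_congr fun a ha => extend_of_mem (hR ha)).mp (isModel_union.mp h.1).1,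
    fun a ha => by
      simpa only [extend_of_mem (hR ha)] using h.2.1 a (progAtoms_subset_union_left R _ ha)⟩

lemma le_of_answerSet_extend (hR : progAtoms R ⊆ U) (hT : T ⊆ U) (hS : S ⊆ U)
    (h : answerSet (R ∪ f.pin T S) (f.extend S W))
    (hWT : ∀ A ∈ T, W A = V.T) (hWS : ∀ A ∈ S, W A = V.Fs) (hN : isModel N R)
    (hNT : ∀ A ∈ T, N A = V.T) (hNS : ∀ A ∈ S, N A = V.Fs) (hNW : interpLe R N W) :
    interpLe R W N := by
  have hle : interpLe (R ∪ f.pin T S) (f.extend S N) (f.extend S W) := by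
    refine forall_mem_progAtoms_union_pin (fun a ha => ?_) ?_ (fun a ha => ?_) (fun a ha => ?_)
      (fun A hA => ?_)
    · rw [extend_of_mem (hR ha), extend_of_mem (hR ha)]; exact hNW a ha
    · rw [extend_z, extend_z]; exact V.pre_refl _
    · rw [extend_of_mem (hT ha), extend_of_mem (hT ha), hNT a ha, hWT a ha]; exact V.pre_refl _
    · rw [extend_of_mem (hS ha), extend_of_mem (hS ha), hNS a ha, hWS a ha]; exact V.pre_refl _
    · rw [extend_p hA, extend_p hA]; exact V.pre_refl _
  intro a ha
  have hWN := h.2.2 _ (isModel_extend hR hT hS hN hNT hNS) hle a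
    (progAtoms_subset_union_left R _ ha)
  rwa [extend_of_mem (hR ha), extend_of_mem (hR ha)] at hWN

end FreshAtoms

section Transfer

variable {P1 P2 P : Program}

lemma seMost.symm (h : seMost P1 P2) : seMost P2 P1 := fun P M => (h P M).symm

lemma seAll.symm (h : seAll P1 P2) : seAll P2 P1 := fun P M => (h P M).symm

lemma seMost.answerSet_union_pin (h : seMost P1 P2) {U : Finset ℕ} (f : FreshAtoms U)
    {T S : Finset ℕ} {W : ℕ → V} (hW : mostPreferred (P1 ∪ P ∪ f.pin T S) (f.extend S W)) :
    answerSet (P2 ∪ P ∪ f.pin T S) (f.extend S W) := by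
  have h' := h (P ∪ f.pin T S) (f.extend S W)
  rw [← Finset.union_assoc, ← Finset.union_assoc] at h'
  exact (h'.mp hW).1

lemma seMost.isModel_solid (h : seMost P1 P2) {W : ℕ → V} (hW : isModel W (P1 ∪ P))
    (hsolid : solid (P1 ∪ P) W) : isModel W (P2 ∪ P) ∧ solid (P2 ∪ P) W := by
  let U := progAtoms (P1 ∪ P) ∪ progAtoms (P2 ∪ P)
  obtain ⟨f⟩ := FreshAtoms.nonempty U
  have hmp : mostPreferred (P1 ∪ P ∪ f.pin (U.filter (W · = V.T)) (U.filter (W · = V.Fs)))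
      (f.extend (U.filter (W · = V.Fs)) W) := by
    refine FreshAtoms.mostPreferred_extend Finset.subset_union_left (Finset.filter_subset _ _)
      (Finset.filter_subset _ _) hW hsolid (fun A hA => (Finset.mem_filter.mp hA).2)
      (fun A hA => (Finset.mem_filter.mp hA).2)
      (fun a ha => Finset.mem_filter.mpr ⟨Finset.mem_union_left _ (mem_fstars.mp ha).1,
        (mem_fstars.mp ha).2⟩) fun N _ hNT hNS _ a ha => ?_
    have haU : a ∈ U := Finset.mem_union_left _ ha
    rcases hv : W a
    · exact V.F_pre _
    · rw [hNS a (Finset.mem_filter.mpr ⟨haU, hv⟩)]; exact V.pre_refl _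
    · exact absurd hv (hsolid a ha)
    · rw [hNT a (Finset.mem_filter.mpr ⟨haU, hv⟩)]; exact V.pre_refl _
  exact FreshAtoms.isModel_solid_of_answerSet_extend Finset.subset_union_right
    (h.answerSet_union_pin f hmp)

lemma seMost.le_of_answerSet (h : seMost P1 P2) {M N : ℕ → V} (hM : answerSet (P1 ∪ P) M)
    (hN : isModel N (P2 ∪ P)) (hNM : interpLe (P2 ∪ P) N M)
    (hfs : ∀ a ∈ fstars (P1 ∪ P) M, N a = V.Fs) : interpLe (P2 ∪ P) M N := by
  let U := progAtoms (P1 ∪ P) ∪ progAtoms (P2 ∪ P)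
  obtain ⟨f⟩ := FreshAtoms.nonempty U
  have hS : fstars (P1 ∪ P) M ⊆ U := (Finset.filter_subset _ _).trans Finset.subset_union_left
  have hMS : ∀ A ∈ fstars (P1 ∪ P) M, M A = V.Fs := fun A hA => (mem_fstars.mp hA).2
  have hmp :
      mostPreferred (P1 ∪ P ∪ f.pin ∅ (fstars (P1 ∪ P) M)) (f.extend (fstars (P1 ∪ P) M) M) :=
    FreshAtoms.mostPreferred_extend Finset.subset_union_left (Finset.empty_subset _) hS hM.1 hM.2.1
      (by simp) hMS subset_rfl fun N hN _ _ hNM => hM.2.2 N hN hNM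
  exact FreshAtoms.le_of_answerSet_extend Finset.subset_union_right (Finset.empty_subset _) hS
    (h.answerSet_union_pin f hmp) (by simp) hMS hN (by simp) hfs hNM

theorem seMost.answerSet_of_answerSet (h : seMost P1 P2) {M : ℕ → V} (hM : answerSet (P1 ∪ P) M) :
    answerSet (P2 ∪ P) M := by
  obtain ⟨hM2, hsolid2⟩ := h.isModel_solid hM.1 hM.2.1
  refine ⟨hM2, hsolid2, fun N hN hNM => ?_⟩
  let N' := (progAtoms (P2 ∪ P)).piecewise N M
  have hN' : isModel N' (P2 ∪ P) :=
    (isModel_congr fun a ha => Finset.piecewise_eq_of_mem _ _ _ ha).mpr hN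
  have hN'M : ∀ a, V.pre (N' a) (M a) := fun a => by
    by_cases ha : a ∈ progAtoms (P2 ∪ P)
    · simpa only [N', Finset.piecewise_eq_of_mem _ _ _ ha] using hNM a ha
    · simpa only [N', Finset.piecewise_eq_of_notMem _ _ _ ha] using V.pre_refl (M a)
  have hN1 := h.symm.isModel_solid (isModel_solidify hN') fun a _ => V.solidify_ne_Ts _
  have hMN1 := hM.2.2 _ hN1.1 fun a ha => V.solidify_pre _ _ (hN'M a) (hM.2.1 a ha)
  have hfs : ∀ a ∈ fstars (P1 ∪ P) M, N' a = V.Fs := fun a ha => by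
    obtain ⟨haP, haFs⟩ := mem_fstars.mp ha
    exact (V.solidify_eq_Fs_iff _).mp (V.eq_Fs_of_Fs_pre _ (haFs ▸ hMN1 a haP))
  intro a ha
  simpa only [N', Finset.piecewise_eq_of_mem _ _ _ ha] using
    h.le_of_answerSet hM hN' (fun b _ => hN'M b) hfs a ha

lemma seAll.fstars_subset (h : seAll P1 P2) {M : ℕ → V} (hM : answerSet (P1 ∪ P) M) :
    fstars (P1 ∪ P) M ⊆ fstars (P2 ∪ P) M := by
  intro a ha
  obtain ⟨haP, haFs⟩ := mem_fstars.mp ha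
  refine mem_fstars.mpr ⟨?_, haFs⟩
  by_contra ha2
  have hM' : answerSet (P1 ∪ P) (Function.update M a V.F) :=
    (h P _).mpr (answerSet_congr (fun b hb => (Function.update_of_ne
      (ne_of_mem_of_not_mem hb ha2) _ _).symm) ((h P M).mp hM))
  have hle : interpLe (P1 ∪ P) (Function.update M a V.F) M := fun b _ => by
    rcases eq_or_ne b a with rfl | hb
    · rw [Function.update_self]; exact V.F_pre _
    · rw [Function.update_of_ne hb]; exact V.pre_refl _
  have hmin := hM.2.2 _ hM'.1 hle a haP
  rw [Function.update_self, haFs] at hmin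
  exact absurd hmin (by decide)

lemma mostPreferred_congr {Q1 Q2 : Program} (has : ∀ N, answerSet Q1 N ↔ answerSet Q2 N)
    (hfs : ∀ N, answerSet Q1 N → fstars Q1 N = fstars Q2 N) (M : ℕ → V) :
    mostPreferred Q1 M ↔ mostPreferred Q2 M := by
  constructor
  · rintro ⟨hM, hmin⟩
    refine ⟨(has M).mp hM, fun N hN => ?_⟩
    rw [← hfs N ((has N).mpr hN), ← hfs M hM]
    exact hmin N ((has N).mpr hN)
  · rintro ⟨hM, hmin⟩
    have hM1 := (has M).mpr hM
    refine ⟨hM1, fun N hN => ?_⟩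
    rw [hfs N hN, hfs M hM1]
    exact hmin N ((has N).mp hN)

lemma seAll.seMost (h : seAll P1 P2) : seMost P1 P2 := fun P =>
  mostPreferred_congr (h P) fun _ hN =>
    (h.fstars_subset hN).antisymm (h.symm.fstars_subset ((h P _).mp hN))

end Transfer

/-- strong equivalence under the most-preferred answer sets coincides
with strong equivalence under all the answer sets. -/
theorem seMost_iff_seAll (P1 P2 : Program) :
    seMost P1 P2 ↔ seAll P1 P2 :=
  ⟨fun h _ _ => ⟨h.answerSet_of_answerSet, h.symm.answerSet_of_answerSet⟩, seAll.seMost⟩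
end

section
/- For a normal logic program P, the answer sets of P in the four-valued semantics (the ⪯-minimal solid models of P) coincide with the standard answer sets of P, i.e., an interpretation M is an answer set of P if and only if M corresponds on the atoms of P to a stable model S of P (M(A) = T for atoms A of P with A ∈ S, and M(A) = F for the remaining atoms of P). -/
private lemma V_le_T (v : V) : v ≤ V.T := by cases v <;> decide
private lemma V_F_le (v : V) : V.F ≤ v := by cases v <;> decide

private lemma foldr_min_le {l : List V} {x : V} (h : x ∈ l) : l.foldr min V.T ≤ x := by
  induction l with
  | nil => cases h
  | cons a l ih =>
    rcases List.mem_cons.mp h with rfl | h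
    · exact min_le_left _ _
    · exact le_trans (min_le_right _ _) (ih h)

private lemma le_foldr_min {l : List V} {c : V} (hc : c ≤ V.T) (h : ∀ x ∈ l, c ≤ x) :
    c ≤ l.foldr min V.T := by
  induction l with
  | nil => exact hc
  | cons a l ih =>
    exact le_min (h a List.mem_cons_self) (ih fun x hx => h x (List.mem_cons_of_mem _ hx))

private lemma body_le_pos {I : ℕ → V} {r : Rule} {a : ℕ} (h : a ∈ r.pos) :
    evalBody I r ≤ I a :=
  foldr_min_le (List.mem_append_left _ (List.mem_map_of_mem (f := I) h))

private lemma body_le_neg {I : ℕ → V} {r : Rule} {b : ℕ} (h : b ∈ r.neg) :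
    evalBody I r ≤ evalNot (I b) :=
  foldr_min_le (List.mem_append_right _ (List.mem_map_of_mem h))

private lemma body_eq_T {I : ℕ → V} {r : Rule} (hp : ∀ a ∈ r.pos, I a = V.T)
    (hn : ∀ b ∈ r.neg, evalNot (I b) = V.T) : evalBody I r = V.T := by
  refine le_antisymm (V_le_T _) (le_foldr_min le_rfl ?_)
  intro x hx
  rcases List.mem_append.mp hx with hx | hx <;> obtain ⟨y, hy, rfl⟩ := List.mem_map.mp hx
  · exact (hp y hy).ge
  · exact (hn y hy).ge

private lemma all_of_foldr_T {l : List V} (h : l.foldr min V.T = V.T) : ∀ x ∈ l, x = V.T :=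
  fun x hx => le_antisymm (V_le_T x) (h ▸ foldr_min_le hx)

private lemma foldr_two {l : List V} (h : ∀ x ∈ l, x = V.F ∨ x = V.T) :
    l.foldr min V.T = V.F ∨ l.foldr min V.T = V.T := by
  induction l with
  | nil => exact Or.inr rfl
  | cons a l ih =>
    rcases h a List.mem_cons_self with ha | ha <;>
    rcases ih (fun x hx => h x (List.mem_cons_of_mem _ hx)) with h2 | h2 <;>
    simp only [List.foldr_cons, ha, h2] <;> first
      | exact Or.inl (by decide)
      | exact Or.inr (by decide)

private lemma body_two {I : ℕ → V} {r : Rule} (h : ∀ a ∈ r.pos, I a = V.F ∨ I a = V.T) :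
    evalBody I r = V.F ∨ evalBody I r = V.T := by
  apply foldr_two
  intro x hx
  rcases List.mem_append.mp hx with hx | hx <;> obtain ⟨y, hy, rfl⟩ := List.mem_map.mp hx
  · exact h y hy
  · unfold evalNot; split <;> simp

private lemma hd_mem_atoms {P : Program} {r : Rule} (hr : r ∈ P) : r.hd ∈ progAtoms P :=
  Finset.mem_biUnion.mpr ⟨r, hr, by simp [Rule.atoms]⟩

private lemma pos_mem_atoms {P : Program} {r : Rule} (hr : r ∈ P) {a : ℕ} (ha : a ∈ r.pos) :
    a ∈ progAtoms P :=
  Finset.mem_biUnion.mpr ⟨r, hr, by simp [Rule.atoms, ha]⟩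

private lemma neg_mem_atoms {P : Program} {r : Rule} (hr : r ∈ P) {b : ℕ} (hb : b ∈ r.neg) :
    b ∈ progAtoms P :=
  Finset.mem_biUnion.mpr ⟨r, hr, by simp [Rule.atoms, hb]⟩

private lemma pre_refl (v : V) : V.pre v v := Or.inl rfl

private lemma pre_F (v : V) : V.pre V.F v := by
  by_cases h : v = V.F
  · exact Or.inl h.symm
  · exact Or.inr (Or.inl ⟨rfl, h⟩)

private lemma pre_F_right {v : V} (h : V.pre v V.F) : v = V.F := by
  rcases h with rfl | ⟨rfl, h2⟩ | ⟨rfl, h2⟩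
  · rfl
  · rfl
  · exact absurd h2 (by decide)

private lemma pre_T_left {v : V} (h : V.pre V.T v) : v = V.T := by
  rcases h with rfl | ⟨h1, _⟩ | ⟨h1, _⟩
  · rfl
  · exact absurd h1 (by decide)
  · exact absurd h1 (by decide)

private lemma sat_normal {I : ℕ → V} {r : Rule} (h : r.hds = []) :
    r.sat I ↔ evalBody I r ≤ I r.hd := by
  unfold Rule.sat; rw [h]; rfl
open Classical in
/-- for a normal logic program, the answer sets in the four-valued
semantics coincide with the standard answer sets (stable models). -/
theorem answerSet_iff_stableModel (P : Program) (hP : normalProg P) (M : ℕ → V) :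
    answerSet P M ↔
      ∃ S : Set ℕ, stableModel P S ∧
        ∀ A ∈ progAtoms P, M A = if A ∈ S then V.T else V.F := by
  classical
  constructor
  · rintro ⟨hM, hsolid, hmin⟩
    -- Step 1: M is two-valued on the atoms of P
    have htwo : ∀ A ∈ progAtoms P, M A = V.T ∨ M A = V.F := by
      set N : ℕ → V := fun A => if M A = V.T then V.T else V.F with hN
      have hNval : ∀ A, N A = V.F ∨ N A = V.T := by
        intro A; simp only [hN]; split <;> simp
      have hNmodel : isModel N P := by
        intro r hr
        rw [sat_normal (hP r hr)]
        rcases body_two (I := N) (r := r) (fun a _ => hNval a) with hb | hb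
        · rw [hb]; exact V_F_le _
        · have hall := all_of_foldr_T hb
          have hposT : ∀ a ∈ r.pos, M a = V.T := by
            intro a ha
            have h1 := hall (N a) (List.mem_append_left _ (List.mem_map_of_mem (f := N) ha))
            by_contra hc
            simp only [hN, if_neg hc] at h1
            exact absurd h1 (by decide)
          have hnegT : ∀ b ∈ r.neg, evalNot (M b) = V.T := by
            intro b hb'
            have h1 := hall (evalNot (N b))
              (List.mem_append_right _ (List.mem_map_of_mem hb'))
            have hbT : M b ≠ V.T := by
              intro hc
              simp only [hN, if_pos hc] at h1
              exact absurd h1 (by decide)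
            have hbTs : M b ≠ V.Ts := hsolid b (neg_mem_atoms hr hb')
            cases hv : M b with
            | F => decide
            | Fs => decide
            | Ts => exact absurd hv hbTs
            | T => exact absurd hv hbT
          have hbM : evalBody M r = V.T := body_eq_T hposT hnegT
          have hsat := hM r hr
          rw [sat_normal (hP r hr), hbM] at hsat
          have hhdT : M r.hd = V.T := le_antisymm (V_le_T _) hsat
          have : N r.hd = V.T := by simp [hN, hhdT]
          rw [this, hb]
      have hNle : interpLe P N M := by
        intro A _
        by_cases h : M A = V.T
        · have : N A = V.T := by simp [hN, h]
          rw [this, h]; exact pre_refl _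
        · have : N A = V.F := by simp [hN, h]
          rw [this]; exact pre_F _
      have hMles := hmin N hNmodel hNle
      intro A hA
      by_cases h : M A = V.T
      · exact Or.inl h
      · right
        have hpre := hMles A hA
        have : N A = V.F := by simp [hN, h]
        rw [this] at hpre
        exact pre_F_right hpre
    -- Step 2: the candidate stable model
    set S : Set ℕ := {A | A ∈ progAtoms P ∧ M A = V.T} with hSdef
    have hclosed : reductClosed P S S := by
      intro r hr hneg hpos
      have hbT : evalBody M r = V.T := by
        apply body_eq_T
        · intro a ha; exact (hpos a ha).2
        · intro b hb
          have hbA := neg_mem_atoms hr hb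
          have hMb : M b = V.F := by
            rcases htwo b hbA with h | h
            · exact absurd (show b ∈ S from ⟨hbA, h⟩) (hneg b hb)
            · exact h
          rw [hMb]; decide
      have hsat := hM r hr
      rw [sat_normal (hP r hr), hbT] at hsat
      exact ⟨hd_mem_atoms hr, le_antisymm (V_le_T _) hsat⟩
    have hleast : ∀ X : Set ℕ, reductClosed P S X → S ⊆ X := by
      intro X hX
      have hX' : reductClosed P S (X ∩ S) := by
        intro r hr hneg hpos
        exact ⟨hX r hr hneg (fun a ha => (hpos a ha).1),
               hclosed r hr hneg (fun a ha => (hpos a ha).2)⟩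
      set N : ℕ → V := fun A => if A ∈ S then (if A ∈ X ∩ S then V.T else V.Ts)
        else if A ∈ progAtoms P then V.F else M A with hN
      have hNmodel : isModel N P := by
        intro r hr
        rw [sat_normal (hP r hr)]
        by_cases hnegS : ∀ b ∈ r.neg, b ∉ S
        · by_cases hposS : ∀ a ∈ r.pos, a ∈ S
          · have hhdS : r.hd ∈ S := hclosed r hr hnegS hposS
            by_cases hposX : ∀ a ∈ r.pos, a ∈ X ∩ S
            · have hhdX : r.hd ∈ X ∩ S := hX' r hr hnegS hposX
              have : N r.hd = V.T := by simp [hN, hhdS, hhdX.1]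
              rw [this]; exact V_le_T _
            · push_neg at hposX
              obtain ⟨a, ha, haX⟩ := hposX
              have haX' : a ∉ X := fun h => haX ⟨h, hposS a ha⟩
              have hNa : N a = V.Ts := by simp [hN, hposS a ha, haX']
              have h1 : evalBody N r ≤ V.Ts := hNa ▸ body_le_pos ha
              have h2 : V.Ts ≤ N r.hd := by
                by_cases hx : r.hd ∈ X
                · have : N r.hd = V.T := by simp [hN, hhdS, hx]
                  rw [this]; decide
                · have : N r.hd = V.Ts := by simp [hN, hhdS, hx]
                  rw [this]
              exact le_trans h1 h2
          · push_neg at hposS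
            obtain ⟨a, ha, haS⟩ := hposS
            have hNa : N a = V.F := by simp [hN, haS, pos_mem_atoms hr ha]
            exact le_trans (hNa ▸ body_le_pos ha) (V_F_le _)
        · push_neg at hnegS
          obtain ⟨b, hb, hbS⟩ := hnegS
          have hNb : evalNot (N b) = V.F := by
            have h2 : N b = V.T ∨ N b = V.Ts := by
              by_cases hx : b ∈ X
              · left; simp [hN, hbS, hx]
              · right; simp [hN, hbS, hx]
            rcases h2 with h | h <;> rw [evalNot, h] <;> decide
          exact le_trans (hNb ▸ body_le_neg hb) (V_F_le _)
      have hNle : interpLe P N M := by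
        intro A hA
        by_cases hAS : A ∈ S
        · have hMA : M A = V.T := hAS.2
          by_cases hx : A ∈ X
          · have : N A = V.T := by simp [hN, hAS, hx]
            rw [this, hMA]; exact pre_refl _
          · have : N A = V.Ts := by simp [hN, hAS, hx]
            rw [this, hMA]; exact Or.inr (Or.inr ⟨rfl, rfl⟩)
        · have : N A = V.F := by simp [hN, hAS, hA]
          rw [this]; exact pre_F _
      have hMN := hmin N hNmodel hNle
      intro A hAS
      have hpre := hMN A hAS.1
      rw [hAS.2] at hpre
      have hNT : N A = V.T := pre_T_left hpre
      by_contra hAX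
      have : N A = V.Ts := by simp [hN, hAS, hAX]
      rw [this] at hNT
      exact absurd hNT (by decide)
    refine ⟨S, ⟨hclosed, hleast⟩, ?_⟩
    intro A hA
    by_cases h : A ∈ S
    · rw [if_pos h]; exact h.2
    · rw [if_neg h]
      rcases htwo A hA with hT | hF
      · exact absurd (show A ∈ S from ⟨hA, hT⟩) h
      · exact hF
  · rintro ⟨S, ⟨hclosed, hleast⟩, hMS⟩
    have hMT : ∀ A ∈ progAtoms P, A ∈ S → M A = V.T := by
      intro A hA hAS; rw [hMS A hA, if_pos hAS]
    have hMF : ∀ A ∈ progAtoms P, A ∉ S → M A = V.F := by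
      intro A hA hAS; rw [hMS A hA, if_neg hAS]
    refine ⟨?_, ?_, ?_⟩
    · intro r hr
      rw [sat_normal (hP r hr)]
      by_cases hhd : r.hd ∈ S
      · rw [hMT _ (hd_mem_atoms hr) hhd]; exact V_le_T _
      · have hcase : (∃ b ∈ r.neg, b ∈ S) ∨ (∃ a ∈ r.pos, a ∉ S) := by
          by_contra hc
          push_neg at hc
          exact hhd (hclosed r hr hc.1 (fun a ha => hc.2 a ha))
        rcases hcase with ⟨b, hb, hbS⟩ | ⟨a, ha, haS⟩
        · have hnb : evalNot (M b) = V.F := by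
            rw [hMT _ (neg_mem_atoms hr hb) hbS]; decide
          exact le_trans (hnb ▸ body_le_neg hb) (V_F_le _)
        · have hma : M a = V.F := hMF _ (pos_mem_atoms hr ha) haS
          exact le_trans (hma ▸ body_le_pos ha) (V_F_le _)
    · intro A hA
      rw [hMS A hA]; split <;> decide
    · intro N hNmodel hNle
      set X : Set ℕ := {A | N A = V.T ∨ A ∉ progAtoms P} with hX
      have hXclosed : reductClosed P S X := by
        intro r hr hneg hpos
        have hbody : evalBody N r = V.T := by
          apply body_eq_T
          · intro a ha
            rcases (hpos a ha : N a = V.T ∨ a ∉ progAtoms P) with h | h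
            · exact h
            · exact absurd (pos_mem_atoms hr ha) h
          · intro b hb
            have hbA := neg_mem_atoms hr hb
            have hMb : M b = V.F := hMF _ hbA (hneg b hb)
            have hp := hNle b hbA
            rw [hMb] at hp
            rw [pre_F_right hp]; decide
        have hsat := hNmodel r hr
        rw [sat_normal (hP r hr), hbody] at hsat
        exact Or.inl (le_antisymm (V_le_T _) hsat)
      have hSX := hleast X hXclosed
      intro A hA
      by_cases hAS : A ∈ S
      · have hx : N A = V.T ∨ A ∉ progAtoms P := hSX hAS
        have hNT : N A = V.T := hx.resolve_right (not_not.mpr hA)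
        rw [hNT, hMT A hA hAS]; exact pre_refl _
      · rw [hMF A hA hAS]; exact pre_F _
end

section
/- Let P be an LPOD and M a model of P. Define the interpretation M' by M'(A) = T if M(A) = T*, and M'(A) = M(A) otherwise. Then M' is a model of P. -/
/-
A map `f` on truth values that is monotone, fixes `T`, reflects and preserves `F*`, and commutes
with `not` commutes with the evaluation of rule heads and bodies; being monotone, it then maps a
rule satisfied by `I` (body ≤ head) to one satisfied by `f ∘ I`. Collapsing `T*` to `T` is such
a map: `not` only distinguishes values `≤ F*`, and `×` only tests for `F*`.
-/

section ValueMap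

variable {f : V → V}

theorem evalHead_comp (hFs : ∀ v, f v = V.Fs ↔ v = V.Fs) (I : ℕ → V) (c : ℕ) (cs : List ℕ) :
    evalHead (f ∘ I) c cs = f (evalHead I c cs) := by
  induction cs generalizing c with
  | nil => rfl
  | cons c' cs ih =>
    simp only [evalHead, Function.comp_apply, hFs]
    split_ifs <;> simp [ih]

theorem foldr_min_map (hf : Monotone f) (hT : f V.T = V.T) (l : List V) :
    (l.map f).foldr min V.T = f (l.foldr min V.T) := by
  induction l with
  | nil => exact hT.symm
  | cons a l ih => simp only [List.map_cons, List.foldr_cons, ih, hf.map_min]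

theorem evalBody_comp (hf : Monotone f) (hT : f V.T = V.T)
    (hNot : ∀ v, evalNot (f v) = f (evalNot v)) (I : ℕ → V) (r : Rule) :
    evalBody (f ∘ I) r = f (evalBody I r) := by
  simp only [evalBody, ← foldr_min_map hf hT, List.map_append, List.map_map]
  congr 2
  exact List.map_congr_left fun b _ => hNot (I b)

theorem Rule.sat_comp (hf : Monotone f) (hT : f V.T = V.T)
    (hFs : ∀ v, f v = V.Fs ↔ v = V.Fs) (hNot : ∀ v, evalNot (f v) = f (evalNot v))
    {I : ℕ → V} {r : Rule} (h : r.sat I) : r.sat (f ∘ I) := by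
  unfold Rule.sat
  rw [evalBody_comp hf hT hNot, evalHead_comp hFs]
  exact hf h

theorem isModel_comp (hf : Monotone f) (hT : f V.T = V.T)
    (hFs : ∀ v, f v = V.Fs ↔ v = V.Fs) (hNot : ∀ v, evalNot (f v) = f (evalNot v))
    {I : ℕ → V} {P : Program} (h : isModel I P) : isModel (f ∘ I) P :=
  fun r hr => Rule.sat_comp hf hT hFs hNot (h r hr)

end ValueMap

def collapse (v : V) : V := if v = V.Ts then V.T else v

theorem collapse_monotone : Monotone collapse := by
  intro a b h
  cases a <;> cases b <;> first | decide | exact absurd h (by decide)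

theorem collapse_eq_Fs_iff (v : V) : collapse v = V.Fs ↔ v = V.Fs := by
  cases v <;> decide

theorem evalNot_collapse (v : V) : evalNot (collapse v) = collapse (evalNot v) := by
  cases v <;> decide

/-- replacing every value `T*` of a model by `T` yields a model. -/
theorem collapse_Ts_isModel (P : Program) (M : ℕ → V) (h : isModel M P) :
    isModel (fun A => if M A = V.Ts then V.T else M A) P :=
  isModel_comp collapse_monotone rfl collapse_eq_Fs_iff evalNot_collapse h
end

section
/- Let φ = c1 ∧ ⋯ ∧ cn be a 3-CNF formula over atoms of Σ, A, B atoms not occurring in φ, Q = {A ← L̃_{i,1} ∧ L̃_{i,2} ∧ L̃_{i,3} : 1 ≤ i ≤ n} (where L̃ = L for an atom literal L and L̃ = not C for L = ¬C), P1 = Q ∪ {A × B ←}, and P2 = Q ∪ {A × B ←} ∪ {A ←}. If I is a four-valued interpretation that is a model of P1 but not a model of P2, then the two-valued assignment J defined on the variables of φ by J(C) = true if I(C) ≤ F* and J(C) = false if I(C) ≥ T*, satisfies φ. -/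
/-- A propositional literal: an atom together with its sign (`true` = positive). -/
abbrev Lit := ℕ × Bool

/-- A 3-clause `L₁ ∨ L₂ ∨ L₃`. -/
abbrev Clause := Lit × Lit × Lit

def Clause.lits (c : Clause) : List Lit := [c.1, c.2.1, c.2.2]

/-- The rule `A ← L̃₁ ∧ L̃₂ ∧ L̃₃` corresponding to a clause. -/
def clauseRule (A : ℕ) (c : Clause) : Rule :=
  ⟨A, [],
    (c.lits.filter (fun l => l.2)).map Prod.fst,
    (c.lits.filter (fun l => !l.2)).map Prod.fst⟩

/-- The atoms occurring in a 3-CNF formula. -/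
def cnfAtoms (φ : List Clause) : Finset ℕ :=
  φ.toFinset.biUnion (fun c => (c.lits.map Prod.fst).toFinset)

/-- A two-valued assignment `J` satisfies a CNF formula. -/
def cnfSat (J : ℕ → Bool) (φ : List Clause) : Prop :=
  ∀ c ∈ φ, ∃ l ∈ c.lits, J l.1 = l.2

/-- The program `Q = {A ← L̃ᵢ₁ ∧ L̃ᵢ₂ ∧ L̃ᵢ₃ : 1 ≤ i ≤ n}`. -/
def Qprog (A : ℕ) (φ : List Clause) : Program :=
  φ.toFinset.image (clauseRule A)

/-- `P1 = Q ∪ {A × B ←}`. -/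
def P1prog (A B : ℕ) (φ : List Clause) : Program :=
  Qprog A φ ∪ {Rule.mk A [B] [] []}

/-- `P2 = Q ∪ {A × B ←} ∪ {A ←}`. -/
def P2prog (A B : ℕ) (φ : List Clause) : Program :=
  Qprog A φ ∪ {Rule.mk A [B] [] []} ∪ {Rule.mk A [] [] []}

lemma foldr_min_le_s12 (L : List V) (h : L.foldr min V.T ≤ V.Fs) :
    ∃ v ∈ L, v ≤ V.Fs := by
  induction L with
  | nil => simp at h; exact absurd h (by decide)
  | cons a t ih =>
    simp only [List.foldr_cons, min_le_iff] at h
    rcases h with h | h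
    · exact ⟨a, by simp, h⟩
    · obtain ⟨v, hv, hv'⟩ := ih h
      exact ⟨v, by simp [hv], hv'⟩

/-- from a model of `P1` that is not a model of `P2`, the induced
two-valued assignment (`true` iff the value is `≤ F*`) satisfies `φ`. -/
theorem separating_model_gives_sat (φ : List Clause) (A B : ℕ)
    (hA : A ∉ cnfAtoms φ) (hB : B ∉ cnfAtoms φ) (hAB : A ≠ B)
    (I : ℕ → V) (h1 : isModel I (P1prog A B φ)) (h2 : ¬ isModel I (P2prog A B φ)) :
    cnfSat (fun C => decide (I C ≤ V.Fs)) φ := by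
  have hsatAB : Rule.sat I (Rule.mk A [B] [] []) := h1 _ (by simp [P1prog])
  have hAnT : I A ≠ V.T := by
    intro hT
    apply h2
    intro r hr
    simp only [P2prog, Finset.mem_union, Finset.mem_singleton] at hr
    rcases hr with (hr | hr) | rfl
    · exact h1 r (by simp [P1prog, Finset.mem_union]; exact Or.inr hr)
    · exact h1 r (by simp [P1prog, Finset.mem_union, hr])
    · simp [Rule.sat, evalBody, evalHead, hT]
  have hAFs : I A = V.Fs := by
    have h := hsatAB
    simp only [Rule.sat, evalBody, evalHead, List.map_nil, List.append_nil,
      List.foldr_nil] at h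
    by_contra hne
    rw [if_neg hne] at h
    cases hv : I A <;> rw [hv] at h hne <;> first | exact absurd h (by decide) | exact hAnT hv | exact hne rfl
  intro c hc
  have hmem : clauseRule A c ∈ P1prog A B φ :=
    Finset.mem_union_left _ (Finset.mem_image_of_mem _ (List.mem_toFinset.2 hc))
  have hs := h1 _ hmem
  simp only [Rule.sat, clauseRule, evalHead, hAFs] at hs
  obtain ⟨v, hv, hvle⟩ := foldr_min_le_s12 _ hs
  simp only [evalBody, List.mem_append, List.mem_map, List.mem_filter] at hv
  rcases hv with ⟨a, ⟨l, ⟨hl, hsgn⟩, rfl⟩, rfl⟩ | ⟨a, ⟨l, ⟨hl, hsgn⟩, rfl⟩, rfl⟩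
  · exact ⟨l, hl, by simp_all⟩
  · refine ⟨l, hl, ?_⟩
    simp only [Bool.not_eq_true'] at hsgn
    simp only [hsgn, decide_eq_false_iff_not]
    intro hle
    simp only [evalNot, if_pos hle] at hvle
    exact absurd hvle (by decide)
end

section
/- For distinct atoms a, b, c, the LPOD {c × a × b ←, a ← c, b ← c, c ← a ∧ b} and the LPOD {c × a × b ←, c × c × b × a ←, a ← c, b ← c, c ← a ∧ b} are logically equivalent in the four-valued logic: a four-valued interpretation is a model of the first program if and only if it is a model of the second. -/
namespace V

theorem le_T (v : V) : v ≤ T := by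
  cases v <;> decide

theorem T_le_iff {v : V} : T ≤ v ↔ v = T := by
  cases v <;> decide

end V

/-!
The second program is the first plus the fact `c × c × b × a`, so it suffices that every model
of the first satisfies it. The repeated `c` is redundant, and `c × b × a` is forced by
`c × a × b`: when `c` is not `F*` both equal `c`; when `c` is `F*`, the rules `a ← c`, `b ← c`
put `a`, `b` at least `F*` while `c ← a ∧ b` puts one of them at most `F*`, i.e. equal to `F*`,
so `a × b` and `b × a` both select the other one, which must be `T`.
-/

theorem evalHead_of_ne_Fs {I : ℕ → V} {c : ℕ} (h : I c ≠ V.Fs) : ∀ cs, evalHead I c cs = I c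
  | [] => rfl
  | _ :: _ => if_neg h

theorem evalHead_cons_self (I : ℕ → V) (c : ℕ) (cs : List ℕ) :
    evalHead I c (c :: cs) = evalHead I c cs := by
  by_cases h : I c = V.Fs
  · exact if_pos h
  · rw [evalHead_of_ne_Fs h, evalHead_of_ne_Fs h]

theorem evalHead_pair (I : ℕ → V) (a b : ℕ) :
    evalHead I a [b] = if I a = V.Fs then I b else I a :=
  rfl

theorem evalHead_pair_comm_eq_T {I : ℕ → V} {a b : ℕ} (h : evalHead I a [b] = V.T)
    (ha : V.Fs ≤ I a) (hb : V.Fs ≤ I b) (hab : min (I a) (I b) ≤ V.Fs) :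
    evalHead I b [a] = V.T := by
  rw [evalHead_pair] at h ⊢
  rcases min_le_iff.mp hab with ha' | hb'
  · have ha_eq := le_antisymm ha' ha
    rw [if_pos ha_eq] at h
    rwa [if_neg (by rw [h]; decide)]
  · have hb_eq := le_antisymm hb' hb
    have ha_ne : I a ≠ V.Fs := fun ha_eq => by rw [if_pos ha_eq, hb_eq] at h; cases h
    rw [if_neg ha_ne] at h
    rwa [if_pos hb_eq]

theorem evalHead_swap_eq_T {I : ℕ → V} {a b c : ℕ} (h : evalHead I c [a, b] = V.T)
    (hca : I c ≤ I a) (hcb : I c ≤ I b) (habc : min (I a) (I b) ≤ I c) :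
    evalHead I c [b, a] = V.T := by
  by_cases hc : I c = V.Fs
  · have hcons : ∀ d ds, evalHead I c (d :: ds) = evalHead I d ds := fun _ _ => if_pos hc
    rw [hcons] at h ⊢
    rw [hc] at hca hcb habc
    exact evalHead_pair_comm_eq_T h hca hcb habc
  · rwa [evalHead_of_ne_Fs hc] at h ⊢

theorem Rule.sat_fact_iff {I : ℕ → V} {c : ℕ} {cs : List ℕ} :
    (Rule.mk c cs [] []).sat I ↔ evalHead I c cs = V.T :=
  V.T_le_iff

theorem Rule.sat_singleton_body_iff {I : ℕ → V} {a c : ℕ} :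
    (Rule.mk a [] [c] []).sat I ↔ I c ≤ I a := by
  simp only [Rule.sat, evalBody, evalHead, List.map, List.append_nil, List.foldr,
    min_eq_left (V.le_T _)]

theorem Rule.sat_pair_body_iff {I : ℕ → V} {a b c : ℕ} :
    (Rule.mk c [] [a, b] []).sat I ↔ min (I a) (I b) ≤ I c := by
  simp only [Rule.sat, evalBody, evalHead, List.map, List.append_nil, List.foldr,
    min_eq_left (V.le_T _)]

theorem isModel_insert {I : ℕ → V} {r : Rule} {P : Program} :
    isModel I (insert r P) ↔ r.sat I ∧ isModel I P :=
  Finset.forall_mem_insert _ _ _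

theorem isModel_singleton {I : ℕ → V} {r : Rule} : isModel I {r} ↔ r.sat I := by
  simp only [isModel, Finset.mem_singleton, forall_eq]

theorem logEquiv_insert_of_forall_sat {P : Program} {r : Rule}
    (h : ∀ I, isModel I P → r.sat I) : logEquiv P (insert r P) := fun I =>
  ⟨fun hI => isModel_insert.mpr ⟨h I hI, hI⟩, fun hI => (isModel_insert.mp hI).2⟩

theorem example_logEquiv_faber_general (a b c : ℕ) :
    logEquiv
      {Rule.mk c [a, b] [] [], Rule.mk a [] [c] [], Rule.mk b [] [c] [],
        Rule.mk c [] [a, b] []}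
      {Rule.mk c [a, b] [] [], Rule.mk c [c, b, a] [] [], Rule.mk a [] [c] [],
        Rule.mk b [] [c] [], Rule.mk c [] [a, b] []} := by
  rw [Finset.insert_comm (Rule.mk c [a, b] [] []) (Rule.mk c [c, b, a] [] [])]
  refine logEquiv_insert_of_forall_sat fun I hI => ?_
  simp only [isModel_insert, isModel_singleton, Rule.sat_fact_iff, Rule.sat_singleton_body_iff,
    Rule.sat_pair_body_iff] at hI
  obtain ⟨hcab, hca, hcb, habc⟩ := hI
  rw [Rule.sat_fact_iff, evalHead_cons_self]
  exact evalHead_swap_eq_T hcab hca hcb habc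

/-- the two programs of Example 3 of Faber et al. are logically
equivalent in the four-valued logic. -/
theorem example_logEquiv_faber (a b c : ℕ) (hab : a ≠ b) (hac : a ≠ c) (hbc : b ≠ c) :
    logEquiv
      {Rule.mk c [a, b] [] [], Rule.mk a [] [c] [], Rule.mk b [] [c] [],
        Rule.mk c [] [a, b] []}
      {Rule.mk c [a, b] [] [], Rule.mk c [c, b, a] [] [], Rule.mk a [] [c] [],
        Rule.mk b [] [c] [], Rule.mk c [] [a, b] []} :=
  example_logEquiv_faber_general a b c
end
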